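/- arXiv:1508.06253 — 2 statements merged into one kernel-verified Lean document; each statement's English description precedes it below -/
import Mathlib

section
/- With σ, σ̄ as in the concavification construction, for all t ∈ (0,1] one has ∫₀ᵗ σ²(s)/σ̄²(s) ds ≤ t. -/
/-!
On each block `(x_j, x_{j+1}]` of the partition of `σ̄`, the function `σ̄²` is the constant `c_j`,
which is also the mean of `σ²` over the block. Hence `∫ σ²/σ̄²` over a whole block is its length,
and `∫₀ σ² = ∫₀ σ̄²` up to every grid point. For `t` inside the block starting at `a`,
`∫ₐᵗ σ²/σ̄² = c_j⁻¹ ∫ₐᵗ σ² ≤ c_j⁻¹ ∫ₐᵗ σ̄² = t - a`, the inequality being `J(t) ≤ Ĵ(t)` combined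
with `J(a) = Ĵ(a)`.
-/

open MeasureTheory Set
open scoped Interval

theorem exists_mem_Ioc_castSucc_succ {α : Type*} [LinearOrder α] {n : ℕ} (x : Fin (n + 1) → α)
    {y : α} (hy : y ∈ Ioc (x 0) (x (Fin.last n))) :
    ∃ i : Fin n, y ∈ Ioc (x i.castSucc) (x i.succ) := by
  suffices ∀ k, y ∈ Ioc (x 0) (x k) → ∃ i : Fin n, y ∈ Ioc (x i.castSucc) (x i.succ) from
    this _ hy
  intro k
  induction k using Fin.induction with
  | zero => exact fun h => absurd h.2 (not_le.2 h.1)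
  | succ k ih =>
    intro h
    by_cases hk : y ≤ x k.castSucc
    · exact ih ⟨h.1, hk⟩
    · exact ⟨k, not_le.1 hk, h.2⟩

theorem integrableOn_Ioc_of_forall_castSucc_succ {α E : Type*} [LinearOrder α]
    [MeasurableSpace α] [NormedAddCommGroup E] {μ : Measure α} {n : ℕ} {x : Fin (n + 1) → α}
    {f : α → E} (hf : ∀ i : Fin n, IntegrableOn f (Ioc (x i.castSucc) (x i.succ)) μ) :
    IntegrableOn f (Ioc (x 0) (x (Fin.last n))) μ :=
  (integrableOn_finite_iUnion.2 hf).mono_set fun _ hy =>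
    mem_iUnion.2 (exists_mem_Ioc_castSucc_succ x hy)

namespace intervalIntegral

variable {E : Type*} [NormedAddCommGroup E] {μ : Measure ℝ} {n : ℕ}
  {x : Fin (n + 1) → ℝ} {f g : ℝ → E}

theorem intervalIntegrable_of_forall_castSucc_succ
    (hf : ∀ i : Fin n, IntervalIntegrable f μ (x i.castSucc) (x i.succ)) (k : Fin (n + 1)) :
    IntervalIntegrable f μ (x 0) (x k) := by
  induction k using Fin.induction with
  | zero => exact IntervalIntegrable.refl
  | succ k ih => exact ih.trans (hf k)

theorem integral_eq_of_forall_castSucc_succ [NormedSpace ℝ E]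
    (hf : ∀ i : Fin n, IntervalIntegrable f μ (x i.castSucc) (x i.succ))
    (hg : ∀ i : Fin n, IntervalIntegrable g μ (x i.castSucc) (x i.succ))
    (hfg : ∀ i : Fin n,
      ∫ s in x i.castSucc..x i.succ, f s ∂μ = ∫ s in x i.castSucc..x i.succ, g s ∂μ)
    (k : Fin (n + 1)) : ∫ s in x 0..x k, f s ∂μ = ∫ s in x 0..x k, g s ∂μ := by
  induction k using Fin.induction with
  | zero => simp
  | succ k ih =>
    rw [← integral_add_adjacent_intervals
        (intervalIntegrable_of_forall_castSucc_succ hf _) (hf k),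
      ← integral_add_adjacent_intervals
        (intervalIntegrable_of_forall_castSucc_succ hg _) (hg k),
      ih, hfg]

section Constant

variable {a b c : ℝ} {μ : Measure ℝ} {f g : ℝ → ℝ}

theorem intervalIntegrable_div_of_eqOn (hf : IntervalIntegrable f μ a b)
    (hg : EqOn g (fun _ => c) (Ι a b)) : IntervalIntegrable (fun s => f s / g s) μ a b :=
  (hf.div_const c).congr_ae (ae_restrict_of_forall_mem measurableSet_uIoc fun _ hs => by
    simp [hg hs])

theorem integral_div_of_eqOn (hg : EqOn g (fun _ => c) (Ι a b)) :
    ∫ s in a..b, f s / g s ∂μ = (∫ s in a..b, f s ∂μ) / c := by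
  rw [← integral_div]
  exact integral_congr_ae (ae_of_all _ fun _ hs => by simp [hg hs])

theorem intervalIntegrable_of_eqOn_const [IsLocallyFiniteMeasure μ]
    (hg : EqOn g (fun _ => c) (Ι a b)) : IntervalIntegrable g μ a b :=
  intervalIntegrable_const.congr_ae (ae_restrict_of_forall_mem measurableSet_uIoc fun _ hs =>
    (hg hs).symm)

theorem integral_of_eqOn_const (hg : EqOn g (fun _ => c) (Ι a b)) :
    ∫ s in a..b, g s = c * (b - a) := by
  rw [integral_congr_ae (ae_of_all _ fun _ hs => hg hs), integral_const, smul_eq_mul, mul_comm]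

end Constant

end intervalIntegral

theorem MeasureTheory.IntegrableOn.intervalIntegrable_of_Ioc_subset {a b y z : ℝ} {f : ℝ → ℝ}
    (hf : IntegrableOn f (Ioc a b)) (hy : a ≤ y) (hyz : y ≤ z) (hz : z ≤ b) :
    IntervalIntegrable f volume y z :=
  (intervalIntegrable_iff_integrableOn_Ioc_of_le hyz).2 (hf.mono_set (Ioc_subset_Ioc hy hz))

section StepMajorant

open intervalIntegral

variable {n : ℕ} {x : Fin (n + 1) → ℝ} {c : Fin n → ℝ} {p q : ℝ → ℝ}

theorem eqOn_uIoc_of_mem_Icc (hq : ∀ j, EqOn q (fun _ => c j) (Ioc (x j.castSucc) (x j.succ)))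
    {j : Fin n} {y : ℝ} (hy : y ∈ Icc (x j.castSucc) (x j.succ)) :
    EqOn q (fun _ => c j) (Ι (x j.castSucc) y) := by
  rw [uIoc_of_le hy.1]
  exact (hq j).mono (Ioc_subset_Ioc_right hy.2)

theorem intervalIntegrable_castSucc_succ (hx : Monotone x)
    (hp : IntegrableOn p (Ioc (x 0) (x (Fin.last n)))) (j : Fin n) :
    IntervalIntegrable p volume (x j.castSucc) (x j.succ) :=
  hp.intervalIntegrable_of_Ioc_subset (hx (Fin.zero_le _)) (hx Fin.castSucc_lt_succ.le)
    (hx (Fin.le_last _))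

theorem intervalIntegrable_div_castSucc_succ (hx : Monotone x)
    (hp : IntegrableOn p (Ioc (x 0) (x (Fin.last n))))
    (hq : ∀ j, EqOn q (fun _ => c j) (Ioc (x j.castSucc) (x j.succ))) (j : Fin n) :
    IntervalIntegrable (fun s => p s / q s) volume (x j.castSucc) (x j.succ) :=
  intervalIntegrable_div_of_eqOn (intervalIntegrable_castSucc_succ hx hp j)
    (eqOn_uIoc_of_mem_Icc hq (right_mem_Icc.2 (hx Fin.castSucc_lt_succ.le)))

theorem intervalIntegrable_castSucc_succ_of_eqOn (hx : Monotone x)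
    (hq : ∀ j, EqOn q (fun _ => c j) (Ioc (x j.castSucc) (x j.succ))) (j : Fin n) :
    IntervalIntegrable q volume (x j.castSucc) (x j.succ) :=
  intervalIntegrable_of_eqOn_const
    (eqOn_uIoc_of_mem_Icc hq (right_mem_Icc.2 (hx Fin.castSucc_lt_succ.le)))

variable (hx : Monotone x) (hp : IntegrableOn p (Ioc (x 0) (x (Fin.last n))))
  (hq : ∀ j, EqOn q (fun _ => c j) (Ioc (x j.castSucc) (x j.succ)))
  (hblock : ∀ j, ∫ s in x j.castSucc..x j.succ, p s = c j * (x j.succ - x j.castSucc))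
include hx hp hq hblock

theorem integral_eq_integral_at_grid (k : Fin (n + 1)) :
    ∫ s in x 0..x k, p s = ∫ s in x 0..x k, q s :=
  integral_eq_of_forall_castSucc_succ (intervalIntegrable_castSucc_succ hx hp)
    (intervalIntegrable_castSucc_succ_of_eqOn hx hq) (fun j => by
      rw [hblock, integral_of_eqOn_const
        (eqOn_uIoc_of_mem_Icc hq (right_mem_Icc.2 (hx Fin.castSucc_lt_succ.le)))]) k

theorem integral_div_eq_sub_at_grid (hc : ∀ j, c j ≠ 0) (k : Fin (n + 1)) :
    ∫ s in x 0..x k, p s / q s = x k - x 0 := by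
  rw [← integral_one]
  refine integral_eq_of_forall_castSucc_succ (intervalIntegrable_div_castSucc_succ hx hp hq)
    (fun _ => intervalIntegrable_const) (fun j => ?_) k
  rw [integral_div_of_eqOn
      (eqOn_uIoc_of_mem_Icc hq (right_mem_Icc.2 (hx Fin.castSucc_lt_succ.le))),
    hblock, integral_one, mul_div_cancel_left₀ _ (hc j)]

theorem integral_div_le_sub_of_dominated_blocks (hc : ∀ j, 0 < c j)
    (hdom : ∀ t ∈ Ioc (x 0) (x (Fin.last n)), ∫ s in x 0..t, p s ≤ ∫ s in x 0..t, q s)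
    {t : ℝ} (ht : t ∈ Ioc (x 0) (x (Fin.last n))) :
    ∫ s in x 0..t, p s / q s ≤ t - x 0 := by
  obtain ⟨j, hjt⟩ := exists_mem_Ioc_castSucc_succ x ht
  set a := x j.castSucc
  have hqt : EqOn q (fun _ => c j) (Ι a t) := eqOn_uIoc_of_mem_Icc hq (Ioc_subset_Icc_self hjt)
  have hx0a : x 0 ≤ a := hx (Fin.zero_le _)
  have hp_at : ∫ s in a..t, p s ≤ c j * (t - a) :=
    calc ∫ s in a..t, p s = (∫ s in x 0..t, p s) - ∫ s in x 0..a, p s :=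
          (integral_interval_sub_left
            (hp.intervalIntegrable_of_Ioc_subset le_rfl (hx0a.trans hjt.1.le) ht.2)
            (hp.intervalIntegrable_of_Ioc_subset le_rfl hx0a (hx (Fin.le_last _)))).symm
      _ ≤ (∫ s in x 0..t, q s) - ∫ s in x 0..a, q s := by
          rw [integral_eq_integral_at_grid hx hp hq hblock]
          exact sub_le_sub_right (hdom t ht) _
      _ = ∫ s in a..t, q s :=
          integral_interval_sub_left
            ((intervalIntegrable_of_forall_castSucc_succ
              (intervalIntegrable_castSucc_succ_of_eqOn hx hq) _).trans
              (intervalIntegrable_of_eqOn_const hqt))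
            (intervalIntegrable_of_forall_castSucc_succ
              (intervalIntegrable_castSucc_succ_of_eqOn hx hq) _)
      _ = c j * (t - a) := integral_of_eqOn_const hqt
  calc ∫ s in x 0..t, p s / q s
      = (∫ s in x 0..a, p s / q s) + ∫ s in a..t, p s / q s :=
        (integral_add_adjacent_intervals
          (intervalIntegrable_of_forall_castSucc_succ
            (intervalIntegrable_div_castSucc_succ hx hp hq) _)
          (intervalIntegrable_div_of_eqOn
            (hp.intervalIntegrable_of_Ioc_subset hx0a hjt.1.le ht.2) hqt)).symm
    _ = (a - x 0) + (∫ s in a..t, p s) / c j := by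
        rw [integral_div_eq_sub_at_grid hx hp hq hblock (fun j => (hc j).ne'),
          integral_div_of_eqOn hqt]
    _ ≤ (a - x 0) + (t - a) := by
        gcongr
        exact (div_le_iff₀ (hc j)).2 (by linarith)
    _ = t - x 0 := by ring

end StepMajorant

theorem stmt_3_general
    (M m : ℕ)
    (lam : Fin (M + 1) → ℝ) (hlam0 : lam 0 = 0)
    (hlam1 : lam (Fin.last M) = 1)
    (σv : Fin M → ℝ)
    (σ : ℝ → ℝ)
    (hσdef : ∀ i : Fin M, ∀ s ∈ Set.Ioc (lam i.castSucc) (lam i.succ), σ s = σv i)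
    (lamb : Fin (m + 1) → ℝ) (hlambmono : StrictMono lamb) (hlamb0 : lamb 0 = 0)
    (hlamb1 : lamb (Fin.last m) = 1)
    (sbv : Fin m → ℝ) (hsbv : ∀ j, 0 < sbv j)
    (σbar : ℝ → ℝ)
    (hσbardef : ∀ j : Fin m, ∀ s ∈ Set.Ioc (lamb j.castSucc) (lamb j.succ), σbar s = sbv j)
    (hdom : ∀ t ∈ Set.Icc (0:ℝ) 1,
      (∫ r in (0:ℝ)..t, (σ r) ^ 2) ≤ ∫ r in (0:ℝ)..t, (σbar r) ^ 2)
    (hblock : ∀ j : Fin m, (∫ s in (lamb j.castSucc)..(lamb j.succ), (σ s) ^ 2)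
      = (sbv j) ^ 2 * (lamb j.succ - lamb j.castSucc)) :
    ∀ t ∈ Set.Ioc (0:ℝ) 1, (∫ s in (0:ℝ)..t, (σ s) ^ 2 / (σbar s) ^ 2) ≤ t := by
  intro t ht
  have hσ : IntegrableOn (fun s => σ s ^ 2) (Ioc 0 1) := by
    rw [← hlam0, ← hlam1]
    refine integrableOn_Ioc_of_forall_castSucc_succ fun i => ?_
    rw [integrableOn_congr_fun (fun s hs => by rw [hσdef i s hs]) measurableSet_Ioc]
    exact integrableOn_const measure_Ioc_lt_top.ne
  rw [← hlamb0, ← hlamb1] at hσ ht hdom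
  simpa [hlamb0] using integral_div_le_sub_of_dominated_blocks hlambmono.monotone hσ
    (fun j s hs => by rw [hσbardef j s hs]) hblock (fun j => pow_pos (hsbv j) 2)
    (fun t ht => hdom t (Ioc_subset_Icc_self ht)) ht

/-- With σ a positive step function and σ̄ the non-increasing effective variance from the
concavification construction, for all t ∈ (0,1] one has ∫₀ᵗ σ²(s)/σ̄²(s) ds ≤ t. -/
theorem stmt_3
    (M m : ℕ) (hM : 0 < M) (hm : 0 < m)
    (lam : Fin (M + 1) → ℝ) (hlam : StrictMono lam) (hlam0 : lam 0 = 0)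
    (hlam1 : lam (Fin.last M) = 1)
    (σv : Fin M → ℝ) (hσv : ∀ i, 0 < σv i)
    (σ : ℝ → ℝ) (hσ0 : σ 0 = σv ⟨0, hM⟩)
    (hσdef : ∀ i : Fin M, ∀ s ∈ Set.Ioc (lam i.castSucc) (lam i.succ), σ s = σv i)
    (lamb : Fin (m + 1) → ℝ) (hlambmono : StrictMono lamb) (hlamb0 : lamb 0 = 0)
    (hlamb1 : lamb (Fin.last m) = 1)
    (sbv : Fin m → ℝ) (hsbv : ∀ j, 0 < sbv j) (hsbvdec : StrictAnti sbv)
    (σbar : ℝ → ℝ) (hσbar0 : σbar 0 = sbv ⟨0, hm⟩)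
    (hσbardef : ∀ j : Fin m, ∀ s ∈ Set.Ioc (lamb j.castSucc) (lamb j.succ), σbar s = sbv j)
    (hsubgrid : ∀ j : Fin (m + 1), ∃ i : Fin (M + 1), lamb j = lam i)
    (hdom : ∀ t ∈ Set.Icc (0:ℝ) 1,
      (∫ r in (0:ℝ)..t, (σ r) ^ 2) ≤ ∫ r in (0:ℝ)..t, (σbar r) ^ 2)
    (hblock : ∀ j : Fin m, (∫ s in (lamb j.castSucc)..(lamb j.succ), (σ s) ^ 2)
      = (sbv j) ^ 2 * (lamb j.succ - lamb j.castSucc)) :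
    ∀ t ∈ Set.Ioc (0:ℝ) 1, (∫ s in (0:ℝ)..t, (σ s) ^ 2 / (σbar s) ^ 2) ≤ t :=
  stmt_3_general M m lam hlam0 hlam1 σv σ hσdef lamb hlambmono hlamb0 hlamb1 sbv hsbv σbar hσbardef
    hdom hblock
end

section
/- Consider maximizing f(x₁,…,x_M) = Σᵢ₌₁^M xᵢ over x ∈ ℝ^M subject to the constraints Σᵢ₌₁^k (∇λᵢ − xᵢ²/(σᵢ²∇λᵢ)) ≥ 0 for all 1 ≤ k ≤ M, where ∇λᵢ = λᵢ − λᵢ₋₁ > 0 and σᵢ > 0. Then there is a unique global maximizer, given by xᵢ* = ∫_{λᵢ₋₁}^{λᵢ} σ²(s)/σ̄(s) ds, and the maximum value is γ* = ∫₀¹ σ²(s)/σ̄(s) ds. -/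
/-!
Write `Δᵢ = ∇λᵢ`, `cᵢ` for the value of `σ̄` on the `i`-th cell, `x*ᵢ = σᵢ² Δᵢ / cᵢ`, and
`gᵢ(x) = Δᵢ - x² / (σᵢ² Δᵢ)` for the summands of the constraints. Completing the square gives
`cᵢ gᵢ(x) + cᵢ / (σᵢ² Δᵢ) (x - x*ᵢ)² = cᵢ Δᵢ - 2 x + x*ᵢ`.
Because `∫ σ̄²` is the concave hull of `∫ σ²`, the partial sums of `(cᵢ² - σᵢ²) Δᵢ` are non-negative
and vanish wherever `c` jumps. Abel summation then gives `∑ cᵢ Δᵢ = ∑ x*ᵢ`, the feasibility of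
`x*`, and, `c` being non-increasing, `∑ cᵢ gᵢ(xᵢ) ≥ 0` for every feasible `x`. Summing the identity,
`2 (∑ x* - ∑ x)` is a sum of non-negative terms, and it vanishes only at `x = x*`.
-/

open MeasureTheory Set

theorem Fin.sum_Iic_succ {α : Type*} [AddCommMonoid α] {n : ℕ} (f : Fin (n + 1) → α)
    (i : Fin n) : ∑ j ≤ i.succ, f j = ∑ j ≤ i.castSucc, f j + f i.succ := by
  rw [← Finset.Iio_insert, Finset.sum_insert Finset.notMem_Iio_self, add_comm]
  congr 2

theorem Fin.sum_Iic_zero {α : Type*} [AddCommMonoid α] {n : ℕ} (f : Fin (n + 1) → α) :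
    ∑ j ≤ (0 : Fin (n + 1)), f j = f 0 := by
  rw [← bot_eq_zero, Finset.Iic_bot, Finset.sum_singleton]

theorem Fin.sum_Iic_last {α : Type*} [AddCommMonoid α] {n : ℕ} (f : Fin (n + 1) → α) :
    ∑ j ≤ Fin.last n, f j = ∑ j, f j := by
  rw [← Fin.top_eq_last, Finset.Iic_top]

section Abel

variable {N : ℕ} {w q : Fin N → ℝ}

theorem mul_sum_Iic_le_sum_Iic_mul (hw : Antitone w) (hq : ∀ k, 0 ≤ ∑ i ≤ k, q i)
    (k : Fin N) : w k * ∑ i ≤ k, q i ≤ ∑ i ≤ k, w i * q i := by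
  cases N with
  | zero => exact k.elim0
  | succ n =>
    induction k using Fin.induction with
    | zero => simp only [Fin.sum_Iic_zero, le_refl]
    | succ i ih =>
      have hstep := mul_le_mul_of_nonneg_right (hw (Fin.castSucc_le_succ i)) (hq i.castSucc)
      rw [Fin.sum_Iic_succ, Fin.sum_Iic_succ, mul_add]
      linarith

theorem sum_mul_nonneg_of_antitone (hw : Antitone w) (hw₀ : ∀ i, 0 ≤ w i)
    (hq : ∀ k, 0 ≤ ∑ i ≤ k, q i) : 0 ≤ ∑ i, w i * q i := by
  cases N with
  | zero => simp
  | succ n =>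
    rw [← Fin.sum_Iic_last]
    exact (mul_nonneg (hw₀ _) (hq _)).trans (mul_sum_Iic_le_sum_Iic_mul hw hq _)

end Abel

noncomputable def slack (Δ s x : ℝ) : ℝ := Δ - x ^ 2 / (s ^ 2 * Δ)

theorem mul_slack_add_sq {Δ s c : ℝ} (hΔ : Δ ≠ 0) (hs : s ≠ 0) (hc : c ≠ 0) (x : ℝ) :
    c * slack Δ s x + c / (s ^ 2 * Δ) * (x - s ^ 2 * Δ / c) ^ 2
      = c * Δ - 2 * x + s ^ 2 * Δ / c := by
  unfold slack
  field_simp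
  ring

/-- The discrete form of `σ̄`: the partial sums of `c² Δ` form the least concave majorant of those
of `s² Δ`, i.e. `c` is non-increasing and they dominate, with equality at the last index of every
level set of `c`. -/
structure IsConcaveEnvelope {N : ℕ} (Δ s c : Fin N → ℝ) : Prop where
  Δ_pos : ∀ i, 0 < Δ i
  s_pos : ∀ i, 0 < s i
  c_pos : ∀ i, 0 < c i
  antitone : Antitone c
  sum_nonneg : ∀ k, 0 ≤ ∑ i ≤ k, (c i ^ 2 - s i ^ 2) * Δ i
  sum_eq_zero : ∀ k, (∀ j, k < j → c j < c k) → ∑ i ≤ k, (c i ^ 2 - s i ^ 2) * Δ i = 0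

namespace IsConcaveEnvelope

variable {N : ℕ} {Δ s c : Fin N → ℝ}

theorem sum_Iic_mul_eq (h : IsConcaveEnvelope Δ s c) (φ : ℝ → ℝ) (k : Fin N) :
    ∑ i ≤ k, φ (c i) * ((c i ^ 2 - s i ^ 2) * Δ i)
      = φ (c k) * ∑ i ≤ k, (c i ^ 2 - s i ^ 2) * Δ i := by
  cases N with
  | zero => exact k.elim0
  | succ n =>
    induction k using Fin.induction with
    | zero => simp only [Fin.sum_Iic_zero]
    | succ i ih =>
      rw [Fin.sum_Iic_succ, Fin.sum_Iic_succ, ih, mul_add]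
      rcases (h.antitone (Fin.castSucc_le_succ i)).eq_or_lt with heq | hlt
      · rw [heq]
      · have hlast : ∀ j, i.castSucc < j → c j < c i.castSucc := fun j hj =>
          (h.antitone (Fin.castSucc_lt_iff_succ_le.1 hj)).trans_lt hlt
        rw [h.sum_eq_zero _ hlast]
        ring

theorem sum_slack_nonneg (h : IsConcaveEnvelope Δ s c) (k : Fin N) :
    0 ≤ ∑ i ≤ k, slack (Δ i) (s i) (s i ^ 2 * Δ i / c i) := by
  have hterm : ∀ i, slack (Δ i) (s i) (s i ^ 2 * Δ i / c i)
      = (c i)⁻¹ ^ 2 * ((c i ^ 2 - s i ^ 2) * Δ i) := fun i => by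
    have := h.Δ_pos i; have := h.s_pos i; have := h.c_pos i
    unfold slack
    field_simp
  simp only [hterm]
  rw [h.sum_Iic_mul_eq (fun t => t⁻¹ ^ 2)]
  exact mul_nonneg (by positivity) (h.sum_nonneg k)

theorem sum_mul_eq (h : IsConcaveEnvelope Δ s c) :
    ∑ i, c i * Δ i = ∑ i, s i ^ 2 * Δ i / c i := by
  have hterm : ∀ i, c i * Δ i - s i ^ 2 * Δ i / c i = (c i)⁻¹ * ((c i ^ 2 - s i ^ 2) * Δ i) :=
    fun i => by
      have := h.c_pos i
      field_simp
  suffices ∑ i, (c i)⁻¹ * ((c i ^ 2 - s i ^ 2) * Δ i) = 0 by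
    simp only [← hterm, Finset.sum_sub_distrib] at this
    linarith
  cases N with
  | zero => simp
  | succ n =>
    rw [← Fin.sum_Iic_last, h.sum_Iic_mul_eq Inv.inv,
      h.sum_eq_zero _ fun j hj => absurd hj (Fin.le_last j).not_gt, mul_zero]

theorem two_mul_sub_sum_eq (h : IsConcaveEnvelope Δ s c) (x : Fin N → ℝ) :
    2 * (∑ i, s i ^ 2 * Δ i / c i - ∑ i, x i)
      = ∑ i, c i * slack (Δ i) (s i) (x i)
        + ∑ i, c i / (s i ^ 2 * Δ i) * (x i - s i ^ 2 * Δ i / c i) ^ 2 := by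
  rw [← Finset.sum_add_distrib]
  simp only [fun i => mul_slack_add_sq (h.Δ_pos i).ne' (h.s_pos i).ne' (h.c_pos i).ne' (x i),
    Finset.sum_add_distrib, Finset.sum_sub_distrib, ← Finset.mul_sum, h.sum_mul_eq]
  ring

theorem weighted_sq_nonneg (h : IsConcaveEnvelope Δ s c) (x : Fin N → ℝ) (i : Fin N) :
    0 ≤ c i / (s i ^ 2 * Δ i) * (x i - s i ^ 2 * Δ i / c i) ^ 2 := by
  have := h.Δ_pos i; have := h.s_pos i; have := h.c_pos i
  positivity

theorem sum_le (h : IsConcaveEnvelope Δ s c) {x : Fin N → ℝ}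
    (hx : ∀ k, 0 ≤ ∑ i ≤ k, slack (Δ i) (s i) (x i)) :
    ∑ i, x i ≤ ∑ i, s i ^ 2 * Δ i / c i := by
  have hslack := sum_mul_nonneg_of_antitone h.antitone (fun i => (h.c_pos i).le) hx
  have hsq := Finset.sum_nonneg fun i (_ : i ∈ Finset.univ) => h.weighted_sq_nonneg x i
  linarith [h.two_mul_sub_sum_eq x]

theorem eq_of_sum_eq (h : IsConcaveEnvelope Δ s c) {x : Fin N → ℝ}
    (hx : ∀ k, 0 ≤ ∑ i ≤ k, slack (Δ i) (s i) (x i))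
    (hsum : ∑ i, x i = ∑ i, s i ^ 2 * Δ i / c i) :
    x = fun i => s i ^ 2 * Δ i / c i := by
  have htotal := h.two_mul_sub_sum_eq x
  rw [hsum, sub_self, mul_zero, eq_comm, add_eq_zero_iff_of_nonneg
    (sum_mul_nonneg_of_antitone h.antitone (fun i => (h.c_pos i).le) hx)
    (Finset.sum_nonneg fun i _ => h.weighted_sq_nonneg x i),
    Finset.sum_eq_zero_iff_of_nonneg fun i _ => h.weighted_sq_nonneg x i] at htotal
  funext i
  have := h.Δ_pos i; have := h.s_pos i; have := h.c_pos i
  have hi := htotal.2 i (Finset.mem_univ i)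
  rw [mul_eq_zero, or_iff_right (by positivity), sq_eq_zero_iff, sub_eq_zero] at hi
  exact hi

end IsConcaveEnvelope

section StepIntegral

variable {f h : ℝ → ℝ} {a b c : ℝ}

theorem intervalIntegrable_of_eqOn_Ioc (hab : a ≤ b) (hf : EqOn f (fun _ => c) (Ioc a b)) :
    IntervalIntegrable f volume a b := by
  refine (intervalIntegrable_iff_integrableOn_Ioc_of_le hab).2 ?_
  refine (integrableOn_const ?_).congr_fun (fun x hx => (hf hx).symm) measurableSet_Ioc
  simp [Real.volume_Ioc]

theorem integral_eq_of_eqOn_Ioc (hab : a ≤ b) (hf : EqOn f (fun _ => c) (Ioc a b)) :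
    ∫ x in a..b, f x = c * (b - a) := by
  rw [intervalIntegral.integral_of_le hab, setIntegral_congr_fun measurableSet_Ioc hf,
    setIntegral_const, Real.volume_real_Ioc_of_le hab, smul_eq_mul, mul_comm]

variable {N : ℕ} {g : Fin (N + 1) → ℝ}

theorem intervalIntegrable_of_cells
    (hf : ∀ i : Fin N, IntervalIntegrable f volume (g i.castSucc) (g i.succ)) (k : Fin (N + 1)) :
    IntervalIntegrable f volume (g 0) (g k) := by
  induction k using Fin.induction with
  | zero => exact .refl
  | succ i ih => exact ih.trans (hf i)

theorem integral_eq_sum_Iic_cells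
    (hf : ∀ i : Fin N, IntervalIntegrable f volume (g i.castSucc) (g i.succ)) (k : Fin N) :
    ∫ x in g 0..g k.succ, f x = ∑ i ≤ k, ∫ x in g i.castSucc..g i.succ, f x := by
  cases N with
  | zero => exact k.elim0
  | succ n =>
    induction k using Fin.induction with
    | zero => rw [Fin.sum_Iic_zero, Fin.castSucc_zero]
    | succ i ih =>
      rw [Fin.sum_Iic_succ, ← ih, Fin.succ_castSucc,
        intervalIntegral.integral_add_adjacent_intervals (intervalIntegrable_of_cells hf _) (hf _)]

theorem integral_eq_sum_cells
    (hf : ∀ i : Fin N, IntervalIntegrable f volume (g i.castSucc) (g i.succ)) :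
    ∫ x in g 0..g (Fin.last N), f x = ∑ i : Fin N, ∫ x in g i.castSucc..g i.succ, f x := by
  cases N with
  | zero => simp
  | succ n => rw [← Fin.succ_last, integral_eq_sum_Iic_cells hf, Fin.sum_Iic_last]

variable {v : Fin N → ℝ}

theorem integral_eq_sum_Iic_of_step (hg : Monotone g)
    (hf : ∀ i, EqOn f (fun _ => v i) (Ioc (g i.castSucc) (g i.succ))) (k : Fin N) :
    ∫ x in g 0..g k.succ, f x = ∑ i ≤ k, v i * (g i.succ - g i.castSucc) := by
  have hcell := fun i : Fin N => hg (Fin.castSucc_le_succ i)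
  rw [integral_eq_sum_Iic_cells fun i => intervalIntegrable_of_eqOn_Ioc (hcell i) (hf i)]
  exact Finset.sum_congr rfl fun i _ => integral_eq_of_eqOn_Ioc (hcell i) (hf i)

theorem integral_eq_of_integral_cells_eq (hg : StrictMono g) (hv : ∀ i, v i ≠ 0)
    (hf : ∀ i, ∫ x in g i.castSucc..g i.succ, f x = v i * (g i.succ - g i.castSucc))
    (hh : ∀ i, EqOn h (fun _ => v i) (Ioc (g i.castSucc) (g i.succ))) (k : Fin N) :
    ∫ x in g 0..g k.succ, f x = ∫ x in g 0..g k.succ, h x := by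
  have hcell := fun i : Fin N => sub_pos.2 (hg (Fin.castSucc_lt_succ (i := i)))
  -- `f` is integrable on each cell because its integral there is nonzero
  have hint (i : Fin N) : IntervalIntegrable f volume (g i.castSucc) (g i.succ) :=
    intervalIntegral.intervalIntegrable_of_integral_ne_zero <| by
      rw [hf]; exact mul_ne_zero (hv i) (hcell i).ne'
  rw [integral_eq_sum_Iic_of_step hg.monotone hh, integral_eq_sum_Iic_cells hint]
  exact Finset.sum_congr rfl fun i _ => hf i

theorem sum_Iic_sq_sub_sq_mul_eq {M : ℕ} {lam : Fin (M + 1) → ℝ} (hlam : Monotone lam)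
    {σ σbar : ℝ → ℝ} {s c : Fin M → ℝ}
    (hσ : ∀ i, ∀ x ∈ Ioc (lam i.castSucc) (lam i.succ), σ x = s i)
    (hσbar : ∀ i, ∀ x ∈ Ioc (lam i.castSucc) (lam i.succ), σbar x = c i) (k : Fin M) :
    ∑ i ≤ k, (c i ^ 2 - s i ^ 2) * (lam i.succ - lam i.castSucc)
      = (∫ x in lam 0..lam k.succ, σbar x ^ 2) - ∫ x in lam 0..lam k.succ, σ x ^ 2 := by
  rw [integral_eq_sum_Iic_of_step (v := fun i => c i ^ 2) hlam
      fun i x hx => by simp only [hσbar i x hx],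
    integral_eq_sum_Iic_of_step (v := fun i => s i ^ 2) hlam fun i x hx => by simp only [hσ i x hx],
    ← Finset.sum_sub_distrib]
  exact Finset.sum_congr rfl fun i _ => sub_mul _ _ _

end StepIntegral

section Subgrid

variable {M m : ℕ} {lam : Fin (M + 1) → ℝ} {lamb : Fin (m + 1) → ℝ}

theorem exists_coarse_cell (hlam : StrictMono lam) (h₀ : lamb 0 ≤ lam 0)
    (h₁ : lam (Fin.last M) ≤ lamb (Fin.last m)) (hsub : ∀ j, ∃ i, lamb j = lam i) (i : Fin M) :
    ∃ j : Fin m, lamb j.castSucc ≤ lam i.castSucc ∧ lam i.succ ≤ lamb j.succ := by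
  classical
  obtain ⟨j₀, hj₀, hmax⟩ := (Finset.univ.filter fun j => lamb j ≤ lam i.castSucc).exists_max_image
    id ⟨0, by simpa using h₀.trans (hlam.monotone (Fin.zero_le _))⟩
  simp only [Finset.mem_filter, Finset.mem_univ, true_and, id] at hj₀ hmax
  induction j₀ using Fin.lastCases with
  | last =>
    exact absurd (h₁.trans hj₀)
      (hlam ((Fin.castSucc_lt_succ (i := i)).trans_le (Fin.le_last _))).not_ge
  | cast j =>
    refine ⟨j, hj₀, ?_⟩
    have hlt : lam i.castSucc < lamb j.succ :=
      lt_of_not_ge fun hle => (Fin.castSucc_lt_succ (i := j)).not_ge (hmax _ hle)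
    obtain ⟨p, hp⟩ := hsub j.succ
    rw [hp] at hlt ⊢
    exact hlam.monotone (Fin.castSucc_lt_iff_succ_le.1 (hlam.lt_iff_lt.1 hlt))

variable {J : Fin M → Fin m}

theorem monotone_coarse_cell (hlam : StrictMono lam) (hlamb : StrictMono lamb)
    (hlo : ∀ i, lamb (J i).castSucc ≤ lam i.castSucc) (hhi : ∀ i, lam i.succ ≤ lamb (J i).succ) :
    Monotone J := fun i i' hii' =>
  Fin.castSucc_lt_succ_iff.1 <| hlamb.lt_iff_lt.1 <|
    calc lamb (J i).castSucc ≤ lam i'.castSucc :=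
          (hlo i).trans (hlam.monotone (Fin.castSucc_le_castSucc_iff.2 hii'))
      _ < lam i'.succ := hlam (Fin.castSucc_lt_succ (i := i'))
      _ ≤ lamb (J i').succ := hhi i'

theorem succ_eq_coarse_succ_of_lt (hlamb : Monotone lamb)
    (h₁ : lamb (Fin.last m) ≤ lam (Fin.last M))
    (hlo : ∀ i, lamb (J i).castSucc ≤ lam i.castSucc) (hhi : ∀ i, lam i.succ ≤ lamb (J i).succ)
    {k : Fin M} (hk : ∀ i, k < i → J k < J i) : lam k.succ = lamb (J k).succ := by
  refine (hhi k).antisymm ?_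
  cases M with
  | zero => exact k.elim0
  | succ n =>
    induction k using Fin.lastCases with
    | last => exact (hlamb (Fin.le_last _)).trans (by rwa [Fin.succ_last])
    | cast i =>
      calc lamb (J i.castSucc).succ ≤ lamb (J i.succ).castSucc :=
            hlamb (Fin.succ_le_castSucc_iff.2 (hk _ (Fin.castSucc_lt_succ (i := i))))
        _ ≤ lam i.succ.castSucc := hlo _
        _ = lam i.castSucc.succ := by rw [Fin.succ_castSucc]

theorem exists_monotone_coarse_cell (hlam : StrictMono lam) (hlamb : StrictMono lamb)
    (h₀ : lamb 0 = lam 0) (h₁ : lamb (Fin.last m) = lam (Fin.last M))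
    (hsub : ∀ j, ∃ i, lamb j = lam i) :
    ∃ J : Fin M → Fin m, Monotone J ∧
      (∀ i, Ioc (lam i.castSucc) (lam i.succ) ⊆ Ioc (lamb (J i).castSucc) (lamb (J i).succ)) ∧
      ∀ k, (∀ i, k < i → J k < J i) → lam k.succ = lamb (J k).succ := by
  choose J hlo hhi using exists_coarse_cell hlam h₀.le h₁.ge hsub
  exact ⟨J, monotone_coarse_cell hlam hlamb hlo hhi,
    fun i => Ioc_subset_Ioc (hlo i) (hhi i),
    fun k => succ_eq_coarse_succ_of_lt hlamb.monotone h₁.le hlo hhi⟩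

end Subgrid

theorem stmt_5_general
    (M m : ℕ)
    (lam : Fin (M + 1) → ℝ) (hlam : StrictMono lam) (hlam0 : lam 0 = 0)
    (hlam1 : lam (Fin.last M) = 1)
    (σv : Fin M → ℝ) (hσv : ∀ i, 0 < σv i)
    (σ : ℝ → ℝ)
    (hσdef : ∀ i : Fin M, ∀ s ∈ Set.Ioc (lam i.castSucc) (lam i.succ), σ s = σv i)
    (lamb : Fin (m + 1) → ℝ) (hlambmono : StrictMono lamb) (hlamb0 : lamb 0 = 0)
    (hlamb1 : lamb (Fin.last m) = 1)
    (sbv : Fin m → ℝ) (hsbv : ∀ j, 0 < sbv j) (hsbvdec : StrictAnti sbv)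
    (σbar : ℝ → ℝ)
    (hσbardef : ∀ j : Fin m, ∀ s ∈ Set.Ioc (lamb j.castSucc) (lamb j.succ), σbar s = sbv j)
    (hsubgrid : ∀ j : Fin (m + 1), ∃ i : Fin (M + 1), lamb j = lam i)
    (hdom : ∀ t ∈ Set.Icc (0:ℝ) 1,
      (∫ r in (0:ℝ)..t, (σ r) ^ 2) ≤ ∫ r in (0:ℝ)..t, (σbar r) ^ 2)
    (hblock : ∀ j : Fin m, (∫ s in (lamb j.castSucc)..(lamb j.succ), (σ s) ^ 2)
      = (sbv j) ^ 2 * (lamb j.succ - lamb j.castSucc))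
    (xstar : Fin M → ℝ)
    (hxstar : ∀ i : Fin M,
      xstar i = ∫ s in (lam i.castSucc)..(lam i.succ), (σ s) ^ 2 / σbar s) :
    (∀ k : Fin M, 0 ≤ ∑ i ∈ Finset.Iic k, ((lam i.succ - lam i.castSucc) -
        (xstar i) ^ 2 / ((σv i) ^ 2 * (lam i.succ - lam i.castSucc)))) ∧
    (∀ x : Fin M → ℝ,
      (∀ k : Fin M, 0 ≤ ∑ i ∈ Finset.Iic k, ((lam i.succ - lam i.castSucc) -
          (x i) ^ 2 / ((σv i) ^ 2 * (lam i.succ - lam i.castSucc)))) →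
      ∑ i, x i ≤ ∑ i, xstar i) ∧
    (∀ x : Fin M → ℝ,
      (∀ k : Fin M, 0 ≤ ∑ i ∈ Finset.Iic k, ((lam i.succ - lam i.castSucc) -
          (x i) ^ 2 / ((σv i) ^ 2 * (lam i.succ - lam i.castSucc)))) →
      (∑ i, x i) = ∑ i, xstar i → x = xstar) ∧
    (∑ i, xstar i) = ∫ s in (0:ℝ)..1, (σ s) ^ 2 / σbar s := by
  obtain ⟨J, hJ, hcell, hend⟩ := exists_monotone_coarse_cell hlam hlambmono
    (hlamb0.trans hlam0.symm) (hlamb1.trans hlam1.symm) hsubgrid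
  have hσbar (i : Fin M) : ∀ s ∈ Ioc (lam i.castSucc) (lam i.succ), σbar s = sbv (J i) :=
    fun s hs => hσbardef (J i) s (hcell i hs)
  have hratio (i : Fin M) : EqOn (fun s => σ s ^ 2 / σbar s) (fun _ => σv i ^ 2 / sbv (J i))
      (Ioc (lam i.castSucc) (lam i.succ)) := fun s hs => by
    simp only [hσdef i s hs, hσbar i s hs]
  have hvalue : ∑ i, xstar i = ∫ s in (0:ℝ)..1, σ s ^ 2 / σbar s := by
    rw [← hlam0, ← hlam1, integral_eq_sum_cells fun i => intervalIntegrable_of_eqOn_Ioc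
      (hlam.monotone (Fin.castSucc_le_succ i)) (hratio i)]
    exact Finset.sum_congr rfl fun i _ => hxstar i
  obtain rfl : xstar = fun i => σv i ^ 2 * (lam i.succ - lam i.castSucc) / sbv (J i) :=
    funext fun i => by
      rw [hxstar, integral_eq_of_eqOn_Ioc (hlam.monotone (Fin.castSucc_le_succ i)) (hratio i)]
      ring
  have hexcess := sum_Iic_sq_sub_sq_mul_eq hlam.monotone hσdef hσbar
  have henv : IsConcaveEnvelope (fun i => lam i.succ - lam i.castSucc) σv (fun i => sbv (J i)) :=
    { Δ_pos := fun i => sub_pos.2 (hlam (Fin.castSucc_lt_succ (i := i)))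
      s_pos := hσv
      c_pos := fun i => hsbv (J i)
      antitone := hsbvdec.antitone.comp_monotone hJ
      sum_nonneg := fun k => by
        rw [hexcess, hlam0, sub_nonneg]
        exact hdom _ ⟨hlam0 ▸ hlam.monotone (Fin.zero_le _), hlam1 ▸ hlam.monotone (Fin.le_last _)⟩
      sum_eq_zero := fun k hk => by
        rw [hexcess, hend k fun i hi => hsbvdec.lt_iff_gt.1 (hk i hi), ← hlamb0.trans hlam0.symm,
          integral_eq_of_integral_cells_eq (h := fun s => σbar s ^ 2) hlambmono
            (fun j => (pow_pos (hsbv j) 2).ne') hblock fun j s hs => by simp only [hσbardef j s hs],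
          sub_self] }
  exact ⟨henv.sum_slack_nonneg, fun _ => henv.sum_le, fun _ => henv.eq_of_sum_eq, hvalue⟩

/-- Optimal path for the maximum (KKT): maximizing Σᵢ xᵢ under the cumulative constraints
Σᵢ≤k (∇λᵢ − xᵢ²/(σᵢ²∇λᵢ)) ≥ 0 has the unique maximizer xᵢ* = ∫_{λᵢ₋₁}^{λᵢ} σ²/σ̄ ds, with
maximum value γ* = ∫₀¹ σ²/σ̄ ds. -/
theorem stmt_5
    (M m : ℕ) (hM : 0 < M) (hm : 0 < m)
    (lam : Fin (M + 1) → ℝ) (hlam : StrictMono lam) (hlam0 : lam 0 = 0)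
    (hlam1 : lam (Fin.last M) = 1)
    (σv : Fin M → ℝ) (hσv : ∀ i, 0 < σv i)
    (σ : ℝ → ℝ) (hσ0 : σ 0 = σv ⟨0, hM⟩)
    (hσdef : ∀ i : Fin M, ∀ s ∈ Set.Ioc (lam i.castSucc) (lam i.succ), σ s = σv i)
    (lamb : Fin (m + 1) → ℝ) (hlambmono : StrictMono lamb) (hlamb0 : lamb 0 = 0)
    (hlamb1 : lamb (Fin.last m) = 1)
    (sbv : Fin m → ℝ) (hsbv : ∀ j, 0 < sbv j) (hsbvdec : StrictAnti sbv)
    (σbar : ℝ → ℝ) (hσbar0 : σbar 0 = sbv ⟨0, hm⟩)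
    (hσbardef : ∀ j : Fin m, ∀ s ∈ Set.Ioc (lamb j.castSucc) (lamb j.succ), σbar s = sbv j)
    (hsubgrid : ∀ j : Fin (m + 1), ∃ i : Fin (M + 1), lamb j = lam i)
    (hdom : ∀ t ∈ Set.Icc (0:ℝ) 1,
      (∫ r in (0:ℝ)..t, (σ r) ^ 2) ≤ ∫ r in (0:ℝ)..t, (σbar r) ^ 2)
    (hblock : ∀ j : Fin m, (∫ s in (lamb j.castSucc)..(lamb j.succ), (σ s) ^ 2)
      = (sbv j) ^ 2 * (lamb j.succ - lamb j.castSucc))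
    (xstar : Fin M → ℝ)
    (hxstar : ∀ i : Fin M,
      xstar i = ∫ s in (lam i.castSucc)..(lam i.succ), (σ s) ^ 2 / σbar s) :
    (∀ k : Fin M, 0 ≤ ∑ i ∈ Finset.Iic k, ((lam i.succ - lam i.castSucc) -
        (xstar i) ^ 2 / ((σv i) ^ 2 * (lam i.succ - lam i.castSucc)))) ∧
    (∀ x : Fin M → ℝ,
      (∀ k : Fin M, 0 ≤ ∑ i ∈ Finset.Iic k, ((lam i.succ - lam i.castSucc) -
          (x i) ^ 2 / ((σv i) ^ 2 * (lam i.succ - lam i.castSucc)))) →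
      ∑ i, x i ≤ ∑ i, xstar i) ∧
    (∀ x : Fin M → ℝ,
      (∀ k : Fin M, 0 ≤ ∑ i ∈ Finset.Iic k, ((lam i.succ - lam i.castSucc) -
          (x i) ^ 2 / ((σv i) ^ 2 * (lam i.succ - lam i.castSucc)))) →
      (∑ i, x i) = ∑ i, xstar i → x = xstar) ∧
    (∑ i, xstar i) = ∫ s in (0:ℝ)..1, (σ s) ^ 2 / σbar s :=
  stmt_5_general M m lam hlam hlam0 hlam1 σv hσv σ hσdef lamb hlambmono hlamb0 hlamb1 sbv hsbv
    hsbvdec σbar hσbardef hsubgrid hdom hblock xstar hxstar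
end
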